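/- arXiv:math/0409090 — 4 statements merged into one kernel-verified Lean document; each statement's English description precedes it below -/
import Mathlib

section
/- For positive integers r, s and 0 ≤ i ≤ r-1, the sum over l_1 from i+1 to r, l_2 from l_1 to r, ..., l_i from l_{i-1} to r, of the number of tuples (a_1,...,a_r) of nonnegative integers with a_1+...+a_r = s+i and at least l_i of the a_j nonzero, equals C(r+s-1, s+i)·C(s+i-1, i). (For i = 0 the nested sum is interpreted as the single count of tuples summing to s with at least 1 nonzero entry.) -/
/-!
For a fixed tuple `a` with `k` nonzero entries, the admissible `l` are the monotone maps from
`Fin i` to `[i + 1, k]`, i.e. multisets of size `i` in a set of `k - i` elements, so there are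
`C(k - 1, i)` of them. With `N = s + i`, there are `C(r, k) * C(N - 1, k - 1)` tuples `a` summing
to `N` with `k` nonzero entries (subtract `1` on the support), and
`C(N - 1, k - 1) * C(k - 1, i) = C(N - 1, i) * C(s - 1, N - k)`, so summing over `k` is
Vandermonde's identity `∑ₖ C(r, k) * C(s - 1, N - k) = C(r + s - 1, N)`.
-/

open Finset

theorem Nat.choose_mul_choose_sub_comm (n k i : ℕ) :
    n.choose k * (n - k).choose i = n.choose i * (n - i).choose k := by
  by_cases h : k + i ≤ n
  · rw [← Nat.choose_symm (n := n) (k := k) (by omega), Nat.choose_mul (by omega),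
      ← Nat.choose_symm (n := n - i) (k := k) (by omega)]
    congr 2
    omega
  · have zero_of_lt : ∀ a b, n < a + b → n.choose a * (n - a).choose b = 0 := fun a b hab => by
      rcases le_or_gt a n with ha | ha
      · rw [Nat.choose_eq_zero_of_lt (n := n - a) (by omega), mul_zero]
      · rw [Nat.choose_eq_zero_of_lt ha, zero_mul]
    rw [zero_of_lt k i (by omega), zero_of_lt i k (by omega)]

theorem sum_choose_mul_choose_mul_choose (r s i : ℕ) (hs : 1 ≤ s) :
    ∑ u ∈ range (s + i + 1), (r.choose u * (s + i - 1).choose (s + i - u)) * (u - 1).choose i =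
      (r + s - 1).choose (s + i) * (s + i - 1).choose i := by
  have term : ∀ u ∈ range (s + i + 1),
      (r.choose u * (s + i - 1).choose (s + i - u)) * (u - 1).choose i =
        (s + i - 1).choose i * (r.choose u * (s - 1).choose (s + i - u)) := by
    intro u hu
    have hu : u ≤ s + i := Nat.lt_succ_iff.1 (mem_range.1 hu)
    have := Nat.choose_mul_choose_sub_comm (s + i - 1) (s + i - u) i
    rw [show s + i - 1 - (s + i - u) = u - 1 by omega, show s + i - 1 - i = s - 1 by omega] at this
    rw [mul_assoc, this]
    ring
  rw [sum_congr rfl term, ← mul_sum, mul_comm, show r + s - 1 = r + (s - 1) by omega,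
    Nat.add_choose_eq,
    Nat.sum_antidiagonal_eq_sum_range_succ (fun a b => r.choose a * (s - 1).choose b)]

theorem Sym.bijective_ofFn_monotone (α : Type*) [LinearOrder α] (n : ℕ) :
    Function.Bijective fun f : {f : Fin n → α // Monotone f} =>
      (⟨List.ofFn f.1, List.length_ofFn⟩ : Sym α n) := by
  constructor
  · rintro ⟨f, hf⟩ ⟨g, hg⟩ h
    have hperm : List.Perm (List.ofFn f) (List.ofFn g) := Quotient.exact (congrArg Sym.toMultiset h)
    exact Subtype.ext (List.ofFn_injective (hperm.eq_of_sortedLE hf.sortedLE_ofFn hg.sortedLE_ofFn))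
  · rintro ⟨m, rfl⟩
    set L := m.sort (· ≤ ·)
    have hL : L.length = m.card := Multiset.length_sort _
    have hsorted : L.SortedLE := (Multiset.pairwise_sort m _).sortedLE
    refine ⟨⟨fun j => L.get (j.cast hL.symm),
      hsorted.monotone_get.comp (Fin.castOrderIso hL.symm).monotone⟩, ?_⟩
    apply Sym.coe_injective
    simp only [List.get_eq_getElem, Fin.val_cast, Sym.coe_mk]
    rw [List.ofFn_congr hL.symm]
    simp only [Fin.val_cast, List.ofFn_getElem]
    exact Multiset.sort_eq m _

theorem Nat.card_monotone_fin (α : Type*) [LinearOrder α] [Fintype α] (n : ℕ) :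
    Nat.card {f : Fin n → α // Monotone f} = (Fintype.card α + n - 1).choose n := by
  rw [Nat.card_eq_of_bijective _ (Sym.bijective_ofFn_monotone α n)]
  exact (Nat.card_eq_fintype_card (α := Sym α n)).trans (Sym.card_sym_eq_choose n)

def monotoneCodRestrictEquiv {ι α : Type*} [Preorder ι] [Preorder α] (S : Set α) :
    {f : ι → α // Monotone f ∧ ∀ j, f j ∈ S} ≃ {f : ι → S // Monotone f} where
  toFun f := ⟨fun j => ⟨f.1 j, f.2.2 j⟩, fun _ _ h => f.2.1 h⟩
  invFun f := ⟨fun j => f.1 j, fun _ _ h => f.2 h, fun j => (f.1 j).2⟩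

instance {ι α : Type*} [Preorder ι] [Preorder α] [Finite ι] (S : Set α) [Finite S] :
    Finite {f : ι → α // Monotone f ∧ ∀ j, f j ∈ S} :=
  Finite.of_equiv _ (monotoneCodRestrictEquiv S).symm

theorem Nat.card_monotone_fin_Icc (n a b : ℕ) :
    Nat.card {l : Fin n → ℕ // Monotone l ∧ ∀ j, l j ∈ Set.Icc a b} =
      (b + 1 - a + n - 1).choose n := by
  rw [Nat.card_congr (monotoneCodRestrictEquiv _), Nat.card_monotone_fin, Fintype.card_Icc,
    Nat.card_Icc]

theorem Nat.card_monotone_fin_Icc_succ (i c : ℕ) :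
    Nat.card {l : Fin i → ℕ // Monotone l ∧ ∀ j, l j ∈ Set.Icc (i + 1) c} =
      (c - 1).choose i := by
  rw [Nat.card_monotone_fin_Icc]
  rcases le_or_gt i c with h | h
  · congr 1
    omega
  · rw [Nat.choose_eq_zero_of_lt (by omega), Nat.choose_eq_zero_of_lt (by omega)]

theorem Finset.card_piAntidiag_nat {ι : Type*} [DecidableEq ι] (s : Finset ι) (n : ℕ) :
    #(piAntidiag s n) = (#s + n - 1).choose n := by
  rw [← card_finsuppAntidiag_nat_eq_choose, finsuppAntidiag, card_map, card_attach]

section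
variable {ι : Type*} [Fintype ι]

theorem card_support_le_sum (a : ι → ℕ) : #{j | a j ≠ 0} ≤ ∑ j, a j := by
  calc #{j | a j ≠ 0} = ∑ j with a j ≠ 0, 1 := card_eq_sum_ones _
    _ ≤ ∑ j with a j ≠ 0, a j :=
      sum_le_sum fun j hj => Nat.one_le_iff_ne_zero.2 (mem_filter.1 hj).2
    _ = ∑ j, a j := sum_filter_ne_zero _

theorem one_le_card_support {a : ι → ℕ} (ha : ∑ j, a j ≠ 0) : 1 ≤ #{j | a j ≠ 0} := by
  obtain ⟨j, -, hj⟩ := exists_ne_zero_of_sum_ne_zero ha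
  exact card_pos.2 ⟨j, mem_filter.2 ⟨mem_univ j, hj⟩⟩

variable [DecidableEq ι]

theorem sum_ite_mem_add_one (T : Finset ι) (b : ι → ℕ) :
    ∑ j, (if j ∈ T then b j + 1 else 0) = ∑ j ∈ T, b j + #T := by
  rw [sum_ite_mem, univ_inter, sum_add_distrib, card_eq_sum_ones]

theorem card_filter_piAntidiag_univ_support_eq (T : Finset ι) {N : ℕ} (h : #T ≤ N) :
    #{a ∈ piAntidiag univ N | ({j | a j ≠ 0} : Finset ι) = T} = (N - 1).choose (N - #T) := by
  have hN : #T + (N - #T) - 1 = N - 1 := by omega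
  rw [← hN, ← card_piAntidiag_nat]
  have lift_pred : ∀ a : ι → ℕ, ({j | a j ≠ 0} : Finset ι) = T →
      (fun j => if j ∈ T then a j - 1 + 1 else 0) = a := by
    rintro a rfl
    funext j
    by_cases hj : a j = 0
    · simp [hj]
    · simp [hj, Nat.sub_add_cancel (Nat.one_le_iff_ne_zero.2 hj)]
  refine card_nbij' (fun a j => a j - 1) (fun b j => if j ∈ T then b j + 1 else 0) ?_ ?_ ?_ ?_
  · intro a ha
    simp only [mem_coe, mem_filter, mem_piAntidiag] at ha ⊢
    obtain ⟨⟨hsum, -⟩, hT⟩ := ha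
    have := sum_ite_mem_add_one T (fun j => a j - 1)
    rw [lift_pred a hT, hsum] at this
    refine ⟨by omega, fun j hj => ?_⟩
    rw [← hT]
    exact mem_filter.2 ⟨mem_univ j, by omega⟩
  · intro b hb
    simp only [mem_coe, mem_filter, mem_piAntidiag] at hb ⊢
    refine ⟨⟨by rw [sum_ite_mem_add_one, hb.1]; omega, fun j _ => mem_univ j⟩, ?_⟩
    ext j
    by_cases hj : j ∈ T <;> simp [hj]
  · intro a ha
    exact lift_pred a (mem_filter.1 ha).2
  · intro b hb
    funext j
    simp only [mem_coe, mem_piAntidiag] at hb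
    by_cases hj : j ∈ T
    · simp [hj]
    · simp only [hj, if_false]
      have := mt (hb.2 j) hj
      omega

theorem filter_piAntidiag_univ_support_eq_of_lt (T : Finset ι) {N : ℕ} (h : N < #T) :
    {a ∈ piAntidiag (univ : Finset ι) N | ({j | a j ≠ 0} : Finset ι) = T} = ∅ :=
  filter_false_of_mem fun a ha hT => by
    have := card_support_le_sum a
    rw [hT, (mem_piAntidiag.1 ha).1] at this
    omega

theorem sum_piAntidiag_univ_apply_card_support {M : Type*} [AddCommMonoid M] (N : ℕ)
    (g : ℕ → M) :
    ∑ a ∈ piAntidiag (univ : Finset ι) N, g #{j | a j ≠ 0} =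
      ∑ u ∈ range (N + 1), ((Fintype.card ι).choose u * (N - 1).choose (N - u)) • g u := by
  set r := Fintype.card ι
  have fiber : ∀ T : Finset ι,
      ∑ a ∈ piAntidiag univ N with ({j | a j ≠ 0} : Finset ι) = T,
      g #{j | a j ≠ 0} = (if #T ≤ N then (N - 1).choose (N - #T) else 0) • g #T := by
    intro T
    rw [sum_congr rfl fun a ha => by rw [(mem_filter.1 ha).2], sum_const]
    split_ifs with h
    · rw [card_filter_piAntidiag_univ_support_eq T h]
    · rw [filter_piAntidiag_univ_support_eq_of_lt T (not_le.1 h), card_empty, zero_smul]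
  rw [← sum_fiberwise_of_maps_to (t := univ.powerset)
    (g := fun a => ({j | a j ≠ 0} : Finset ι))
    fun a _ => mem_powerset.2 (subset_univ _), sum_congr rfl fun T _ => fiber T,
    sum_powerset_apply_card (fun u => (if u ≤ N then (N - 1).choose (N - u) else 0) • g u),
    card_univ]
  calc ∑ u ∈ range (r + 1),
        r.choose u • (if u ≤ N then (N - 1).choose (N - u) else 0) • g u
      = ∑ u ∈ range (r + N + 1),
          r.choose u • (if u ≤ N then (N - 1).choose (N - u) else 0) • g u :=
        sum_subset (range_subset_range.2 (by omega)) fun u _ hu => by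
          rw [Nat.choose_eq_zero_of_lt (by simpa using hu), zero_smul]
    _ = ∑ u ∈ range (N + 1), (r.choose u * (N - 1).choose (N - u)) • g u := by
      refine (sum_subset (range_subset_range.2 (by omega)) fun u _ hu => ?_).symm.trans
        (sum_congr rfl fun u hu => ?_)
      · rw [if_neg (by simpa using hu), zero_smul, smul_zero]
      · rw [if_pos (Nat.lt_succ_iff.1 (mem_range.1 hu)), smul_smul]

end

theorem monotone_le_last_iff {i c r : ℕ} (hc : 1 ≤ c) (hcr : c ≤ r) (l : Fin i → ℕ) :
    (Monotone l ∧ (∀ j, i + 1 ≤ l j ∧ l j ≤ r) ∧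
        (if h : 0 < i then l ⟨i - 1, by omega⟩ else 1) ≤ c) ↔
      Monotone l ∧ ∀ j, l j ∈ Set.Icc (i + 1) c := by
  constructor
  · rintro ⟨hl, hbound, hlast⟩
    refine ⟨hl, fun j => ⟨(hbound j).1, ?_⟩⟩
    have hi : 0 < i := j.pos
    rw [dif_pos hi] at hlast
    have hj : j ≤ ⟨i - 1, by omega⟩ := Fin.le_def.2 (by have := j.isLt; dsimp only; omega)
    exact (hl hj).trans hlast
  · rintro ⟨hl, hbound⟩
    refine ⟨hl, fun j => ⟨(hbound j).1, (hbound j).2.trans hcr⟩, ?_⟩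
    split_ifs with hi
    · exact (hbound _).2
    · exact hc

def admissiblePairsEquiv (r s i : ℕ) (hs : 1 ≤ s) :
    {p : (Fin i → ℕ) × (Fin r → ℕ) //
      Monotone p.1 ∧ (∀ j, i + 1 ≤ p.1 j ∧ p.1 j ≤ r) ∧ (∑ j, p.2 j) = s + i ∧
        (if h : 0 < i then p.1 ⟨i - 1, Nat.sub_lt h one_pos⟩ else 1) ≤ #{j | p.2 j ≠ 0}} ≃
      Σ a : piAntidiag (univ : Finset (Fin r)) (s + i),
        {l : Fin i → ℕ // Monotone l ∧ ∀ j, l j ∈ Set.Icc (i + 1) #{j | a.1 j ≠ 0}} :=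
  have hiff (a : Fin r → ℕ) (ha : ∑ j, a j = s + i) (l : Fin i → ℕ) :=
    monotone_le_last_iff (l := l) (one_le_card_support (a := a) (by omega))
      ((card_filter_le _ _).trans (card_fin r).le)
  { toFun p := ⟨⟨p.1.2, mem_piAntidiag.2 ⟨p.2.2.2.1, fun j _ => mem_univ j⟩⟩, p.1.1,
      (hiff _ p.2.2.2.1 _).1 ⟨p.2.1, p.2.2.1, p.2.2.2.2⟩⟩
    invFun q := ⟨(q.2.1, q.1.1), by
      have ha := (mem_piAntidiag.1 q.1.2).1
      obtain ⟨h1, h2, h3⟩ := (hiff _ ha _).2 q.2.2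
      exact ⟨h1, h2, ha, h3⟩⟩
    left_inv _ := rfl
    right_inv _ := rfl }

theorem stmt3 (r s i : ℕ) (hs : 1 ≤ s) :
    Nat.card {p : (Fin i → ℕ) × (Fin r → ℕ) //
      Monotone p.1 ∧ (∀ j, i + 1 ≤ p.1 j ∧ p.1 j ≤ r) ∧
      (∑ j, p.2 j) = s + i ∧
      (if h : 0 < i then p.1 ⟨i - 1, by omega⟩ else 1) ≤
        (Finset.univ.filter fun j => p.2 j ≠ 0).card }
    = (r + s - 1).choose (s + i) * (s + i - 1).choose i := by
  rw [Nat.card_congr (admissiblePairsEquiv r s i hs), Nat.card_sigma]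
  simp only [Nat.card_monotone_fin_Icc_succ]
  rw [sum_coe_sort (piAntidiag univ (s + i)) (fun a => (#{j | a j ≠ 0} - 1).choose i),
    sum_piAntidiag_univ_apply_card_support (s + i) (fun u => (u - 1).choose i), Fintype.card_fin]
  exact sum_choose_mul_choose_mul_choose r s i hs
end

section
/- Let d_1 ≤ d_2 ≤ ... ≤ d_r be positive real numbers (or positive integers), let s ≥ 1, and for i = 1,...,r set m_i = s·d_1 + d_2 + ... + d_i. Then (∏_{i=1}^r m_i)/r! ≤ C(s+r-1, r)·d_1·d_2···d_r, where C(s+r-1,r) is the binomial coefficient. -/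
/-!
Monotonicity of the `d i` gives `m_i ≤ (s + i - 1) d_i` term by term, and the product of the
factors `s + i - 1` is the rising factorial `s (s + 1) ⋯ (s + r - 1) = r! · C(s + r - 1, r)`.
-/

open Finset

theorem prod_Icc_add_sub_one_eq_ascFactorial (s r : ℕ) :
    ∏ i ∈ Icc 1 r, (s + i - 1) = s.ascFactorial r := by
  rw [Nat.ascFactorial_eq_prod_range, ← Ico_add_one_right_eq_Icc, prod_Ico_eq_prod_range]
  refine prod_congr (by simp) fun i _ => by omega

section OrderedSemiring

variable {R : Type*} [CommSemiring R] [PartialOrder R] [IsOrderedRing R]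

theorem mul_add_sum_Icc_two_le (s i : ℕ) (hi : 1 ≤ i) (d : ℕ → R)
    (hmono : ∀ j, 1 ≤ j → j ≤ i → d j ≤ d i) :
    (s : R) * d 1 + ∑ j ∈ Icc 2 i, d j ≤ ((s + i - 1 : ℕ) : R) * d i := by
  have hsum : ∑ j ∈ Icc 2 i, d j ≤ ∑ _j ∈ Icc 2 i, d i :=
    sum_le_sum fun j hj => hmono j (by grind) (mem_Icc.1 hj).2
  calc (s : R) * d 1 + ∑ j ∈ Icc 2 i, d j ≤ s * d i + ((i - 1 : ℕ) : R) * d i := by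
        rw [sum_const, Nat.card_Icc, nsmul_eq_mul] at hsum
        gcongr
        · exact hmono 1 le_rfl hi
        · simpa [show i + 1 - 2 = i - 1 by omega] using hsum
    _ = ((s + i - 1 : ℕ) : R) * d i := by
        rw [Nat.add_sub_assoc hi, Nat.cast_add, add_mul]

end OrderedSemiring

theorem stmt4_general (r s : ℕ) (d : ℕ → ℝ)
    (hpos : ∀ i, 1 ≤ i → i ≤ r → 0 < d i)
    (hmono : ∀ i j, 1 ≤ i → i ≤ j → j ≤ r → d i ≤ d j) :
    (∏ i ∈ Finset.Icc 1 r, ((s : ℝ) * d 1 + ∑ j ∈ Finset.Icc 2 i, d j)) / (r.factorial : ℝ)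
      ≤ ((s + r - 1).choose r : ℝ) * ∏ i ∈ Finset.Icc 1 r, d i := by
  have hprod : ∏ i ∈ Icc 1 r, (((s + i - 1 : ℕ) : ℝ) * d i)
      = r.factorial * ((s + r - 1).choose r * ∏ i ∈ Icc 1 r, d i) := by
    rw [prod_mul_distrib, ← Nat.cast_prod, prod_Icc_add_sub_one_eq_ascFactorial,
      Nat.ascFactorial_eq_factorial_mul_choose', Nat.cast_mul, mul_assoc]
  rw [div_le_iff₀' (by positivity), ← hprod]
  refine prod_le_prod (fun i hi => ?_) fun i hi => ?_ <;> obtain ⟨hi1, hir⟩ := mem_Icc.1 hi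
  · have hd : ∀ j, 1 ≤ j → j ≤ i → 0 ≤ d j := fun j hj hji => (hpos j hj (hji.trans hir)).le
    exact add_nonneg (mul_nonneg s.cast_nonneg (hd 1 le_rfl hi1))
      (sum_nonneg fun j hj => hd j (by grind) (mem_Icc.1 hj).2)
  · exact mul_add_sum_Icc_two_le s i hi1 d fun j hj hji => hmono j i hj hji hir

theorem stmt4 (r s : ℕ) (hr : 1 ≤ r) (hs : 1 ≤ s) (d : ℕ → ℝ)
    (hpos : ∀ i, 1 ≤ i → i ≤ r → 0 < d i)
    (hmono : ∀ i j, 1 ≤ i → i ≤ j → j ≤ r → d i ≤ d j) :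
    (∏ i ∈ Finset.Icc 1 r, ((s : ℝ) * d 1 + ∑ j ∈ Finset.Icc 2 i, d j)) / (r.factorial : ℝ)
      ≤ ((s + r - 1).choose r : ℝ) * ∏ i ∈ Finset.Icc 1 r, d i :=
  stmt4_general r s d hpos hmono
end

section
/- Let k be a field, R = k[x_0,...,x_n], and let F_1,...,F_r ∈ R be a homogeneous regular sequence with deg F_i = d_i. Set I = (F_1,...,F_r) and J = (F_2,...,F_r). Then for each positive integer s there is a short exact sequence of graded R-modules 0 → J^s(-d_1) → I^{s-1}(-d_1) ⊕ J^s → I^s → 0, where the first map sends x to (x, F_1·x) ∈ I^{s-1}(-d_1) ⊕ J^s (noting J^s ⊆ I^{s-1}), and the second sends (y, z) to F_1·y - z. -/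
/-!
Everything except exactness in the middle is ideal arithmetic, using
`(F₁, J)^s ⊆ F₁ (F₁, J)^(s-1) + J^s`. Exactness in the middle says that `F₁` is a nonzerodivisor
modulo `J^s`. Since `J^s` is homogeneous, this may be checked after localizing at the irrelevant
ideal `m`: if `u y ∈ J^s` with `u ∉ m`, then `y ∈ J^s + m^N` for every `N`, and comparing
homogeneous components gives `y ∈ J^s`. In the local ring the regular sequence may be permuted,
and `g` is a nonzerodivisor modulo `(f, l)^s` whenever `g :: f :: l` is regular, by induction on
the length and on `s`: modulo `f` the claim for `l` writes `y = x + z f` with `x ∈ (l)^s`, and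
cancelling `f` from `g z f ∈ (f, l)^s` puts `g z`, hence `z`, in `(f, l)^(s-1)`.
-/

open RingTheory.Sequence
open scoped Pointwise

namespace Ideal

variable {A : Type*} [CommRing A]

theorem ofList_ofFn {n : ℕ} (f : Fin n → A) : ofList (List.ofFn f) = span (Set.range f) := by
  rw [ofList]
  congr 1
  ext x
  exact List.mem_ofFn' f x

theorem sup_pow_succ_le (K L : Ideal A) (s : ℕ) :
    (K ⊔ L) ^ (s + 1) ≤ K * (K ⊔ L) ^ s ⊔ L ^ (s + 1) := by
  induction s with
  | zero => simp
  | succ s ih =>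
    calc (K ⊔ L) ^ (s + 2) = (K ⊔ L) ^ (s + 1) * (K ⊔ L) := pow_succ _ _
      _ ≤ (K * (K ⊔ L) ^ s ⊔ L ^ (s + 1)) * (K ⊔ L) := mul_mono_left ih
      _ ≤ K * (K ⊔ L) ^ (s + 1) ⊔ L ^ (s + 2) := by
        rw [sup_mul, mul_assoc, ← pow_succ, mul_sup, ← pow_succ]
        refine sup_le le_sup_left (sup_le (le_sup_of_le_left ?_) le_sup_right)
        rw [mul_comm]
        exact mul_mono_right (pow_right_mono le_sup_right _)

theorem mem_span_singleton_sup_pow_of_mul_mem {f w : A} {K : Ideal A} {s : ℕ}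
    (hf : ∀ v, f * v ∈ K ^ (s + 1) → v ∈ K ^ (s + 1))
    (hw : f * w ∈ (span {f} ⊔ K) ^ (s + 1)) : w ∈ (span {f} ⊔ K) ^ s := by
  obtain ⟨a, ha, b, hb, hab⟩ := Submodule.mem_sup.mp (sup_pow_succ_le _ _ s hw)
  obtain ⟨w', hw', rfl⟩ := mem_span_singleton_mul.mp ha
  have hb' : w - w' ∈ K ^ (s + 1) := hf _ (by rwa [mul_sub, ← hab, add_sub_cancel_left])
  have : w - w' ∈ (span {f} ⊔ K) ^ s :=
    pow_le_pow_right s.le_succ (pow_right_mono le_sup_right _ hb')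
  simpa using add_mem hw' this

theorem mem_span_singleton_sup_pow_succ_of_mul_mem {f g y : A} {K : Ideal A} {t : ℕ}
    (hf : ∀ v, f * v ∈ K ^ (t + 1) → v ∈ K ^ (t + 1))
    (hg : ∀ v, g * v ∈ (span {f} ⊔ K) ^ t → v ∈ (span {f} ⊔ K) ^ t)
    (hgq : ∀ v : A ⧸ span {f}, Quotient.mk _ g * v ∈ K.map (Quotient.mk _) ^ (t + 1) →
      v ∈ K.map (Quotient.mk _) ^ (t + 1))
    (hy : g * y ∈ (span {f} ⊔ K) ^ (t + 1)) : y ∈ (span {f} ⊔ K) ^ (t + 1) := by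
  have hyK : y ∈ K ^ (t + 1) ⊔ span {f} := by
    rw [← mem_quotient_iff_mem_sup, Ideal.map_pow]
    refine hgq _ ?_
    rw [← bot_sup_eq (map _ K), ← map_quotient_self (span {f}), ← map_sup, ← Ideal.map_pow,
      ← _root_.map_mul]
    exact mem_map_of_mem _ hy
  obtain ⟨x, hx, _, hz, rfl⟩ := Submodule.mem_sup.mp hyK
  obtain ⟨z, rfl⟩ := mem_span_singleton'.mp hz
  have hxJ : x ∈ (span {f} ⊔ K) ^ (t + 1) := pow_right_mono le_sup_right _ hx
  have hgz : g * z ∈ (span {f} ⊔ K) ^ t := by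
    refine mem_span_singleton_sup_pow_of_mul_mem hf ?_
    have := sub_mem hy (mul_mem_left _ g hxJ)
    rwa [show g * (x + z * f) - g * x = f * (g * z) by ring] at this
  refine add_mem hxJ ?_
  rw [pow_succ]
  exact mul_mem_mul (hg z hgz) (mem_sup_left (mem_span_singleton_self f))

theorem mem_sup_pow_of_unit_add_mul_mem {P m : Ideal A} {c v z : A} (hc : IsUnit c) (hv : v ∈ m)
    (hz : (c + v) * z ∈ P) (N : ℕ) :
    z ∈ P ⊔ m ^ N := by
  induction N with
  | zero => simp
  | succ N ih =>
    obtain ⟨p, hp, w, hw, rfl⟩ := Submodule.mem_sup.mp ih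
    have hvz : v * (p + w) ∈ P ⊔ m ^ (N + 1) := by
      rw [mul_add, pow_succ']
      exact add_mem (mem_sup_left (P.mul_mem_left v hp))
        (mem_sup_right (mul_mem_mul hv hw))
    refine (unit_mul_mem_iff_mem _ hc).mp ?_
    rw [show c * (p + w) = (c + v) * (p + w) - v * (p + w) by ring]
    exact sub_mem (mem_sup_left hz) hvz

theorem IsHomogeneous.pow {ι σ A : Type*} [CommSemiring A] [DecidableEq ι] [AddMonoid ι]
    [SetLike σ A] [AddSubmonoidClass σ A] {𝒜 : ι → σ} [GradedRing 𝒜] {I : Ideal A}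
    (h : I.IsHomogeneous 𝒜) (n : ℕ) : (I ^ n).IsHomogeneous 𝒜 := by
  induction n with
  | zero => simpa [one_eq_top] using IsHomogeneous.top 𝒜
  | succ n ih => rw [pow_succ]; exact ih.mul h

end Ideal

namespace RingTheory.Sequence

variable {A : Type*} [CommRing A]

theorem IsWeaklyRegular.quotient_span_singleton {f : A} {l : List A}
    (h : IsWeaklyRegular A (f :: l)) :
    IsWeaklyRegular (A ⧸ Ideal.span {f}) (l.map (Ideal.Quotient.mk (Ideal.span {f}))) := by
  have hspan : f • (⊤ : Submodule A A) = Ideal.span {f} := by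
    rw [← Submodule.ideal_span_singleton_smul, smul_eq_mul, Ideal.mul_top]
  let e := (Submodule.quotEquivOfEq _ _ hspan).toAddEquiv
  refine (AddEquiv.isWeaklyRegular_congr (e := e) ?_).mp ((isWeaklyRegular_cons_iff' A f l).mp h).2
  refine List.forall₂_same.mpr fun a _ x => ?_
  obtain ⟨r, rfl⟩ := Ideal.Quotient.mk_surjective a
  obtain ⟨m, rfl⟩ := Submodule.Quotient.mk_surjective _ x
  rfl

theorem IsWeaklyRegular.of_subperm_of_subset_jacobson [IsNoetherianRing A] {l l' : List A}
    (h : IsWeaklyRegular A l) (hl : ∀ x ∈ l, x ∈ Ring.jacobson A) (hsub : l'.Subperm l) :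
    IsWeaklyRegular A l' := by
  have hl' : ∀ x ∈ l, x ∈ (Module.annihilator A A).jacobson := by
    rwa [Module.annihilator_eq_bot.mpr inferInstance, Ideal.jacobson_bot]
  obtain ⟨t, hperm, hsl⟩ := hsub
  obtain ⟨rest, hrest⟩ := hsl.exists_perm_append
  have : IsWeaklyRegular A t := ((isWeaklyRegular_append_iff A t rest).mp
    (h.of_perm_of_subset_jacobson_annihilator hrest hl')).1
  exact this.of_perm_of_subset_jacobson_annihilator hperm
    fun x hx => hl' x (hrest.symm.subset (List.mem_append_left _ hx))

theorem IsWeaklyRegular.mem_ofList_pow_of_mul_mem [IsNoetherianRing A] {g : A} {l : List A}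
    (hreg : IsWeaklyRegular A (g :: l)) (hjac : ∀ x ∈ g :: l, x ∈ Ring.jacobson A) {s : ℕ}
    {y : A} (hy : g * y ∈ Ideal.ofList l ^ s) : y ∈ Ideal.ofList l ^ s := by
  obtain ⟨n, hn⟩ : ∃ n, l.length = n := ⟨_, rfl⟩
  induction n generalizing A g l s y with
  | zero =>
    obtain rfl : l = [] := List.eq_nil_of_length_eq_zero hn
    rcases s with _ | s
    · simp
    · have hg : IsSMulRegular A g := ((isWeaklyRegular_cons_iff A g []).mp hreg).1
      rw [Ideal.ofList_nil, ← Ideal.zero_eq_bot, zero_pow s.succ_ne_zero] at hy ⊢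
      exact hg.right_eq_zero_of_smul (by simpa using hy)
  | succ n ihl =>
    obtain _ | ⟨f, l⟩ := l
    · simp at hn
    have hn : l.length = n := by simpa using hn
    have hsub : ∀ l', l'.Subperm (g :: f :: l) → IsWeaklyRegular A l' :=
      fun l' h => hreg.of_subperm_of_subset_jacobson hjac h
    set mk := Ideal.Quotient.mk (Ideal.span {f})
    have hjacq : ∀ x ∈ (g :: l).map mk, x ∈ Ring.jacobson (A ⧸ Ideal.span {f}) := by
      simp only [List.map_cons, List.mem_cons, List.mem_map]
      rintro _ (rfl | ⟨x, hx, rfl⟩)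
      · exact Ring.le_comap_jacobson (f := mk) (hjac g List.mem_cons_self)
      · exact Ring.le_comap_jacobson (f := mk) (hjac x (by simp [hx]))
    induction s using Nat.strong_induction_on generalizing y with
    | _ s ihs =>
    rcases s with _ | t
    · simp
    simp only [Ideal.ofList_cons] at ihs hy ⊢
    refine Ideal.mem_span_singleton_sup_pow_succ_of_mul_mem ?_ ?_ ?_ hy
    · exact fun v hv => ihl (hsub _ (List.sublist_cons_self g _).subperm)
        (fun x hx => hjac x (List.mem_cons_of_mem g hx)) hv hn
    · exact fun v hv => ihs t t.lt_succ_self hv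
    · intro v hv
      rw [Ideal.map_ofList] at hv ⊢
      exact ihl (hsub _ (List.Perm.swap g f l).subperm).quotient_span_singleton hjacq hv
        (by simpa using hn)

end RingTheory.Sequence

namespace MvPolynomial

attribute [local instance] MvPolynomial.gradedAlgebra

variable {σ R : Type*} [CommRing R]

theorem mem_of_forall_mem_sup_pow_idealOfVars {P : Ideal (MvPolynomial σ R)}
    (hP : P.IsHomogeneous (homogeneousSubmodule σ R)) {y : MvPolynomial σ R}
    (hy : ∀ N, y ∈ P ⊔ idealOfVars σ R ^ N) : y ∈ P := by
  refine (mem_iff_homogeneousComponent_mem hP y).mpr fun d => ?_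
  obtain ⟨p, hp, w, hw, rfl⟩ := Submodule.mem_sup.mp (hy (d + 1))
  have hwd : homogeneousComponent d w = 0 := by
    refine homogeneousComponent_eq_zero' _ _ fun x hx hxd => ?_
    exact mem_support_iff.mp hx ((mem_pow_idealOfVars_iff' _ w).mp hw x (by omega))
  rw [map_add, hwd, add_zero]
  exact homogeneousComponent_mem_of_mem hP hp d

theorem mem_of_mul_mem_of_isUnit_constantCoeff {P : Ideal (MvPolynomial σ R)}
    (hP : P.IsHomogeneous (homogeneousSubmodule σ R)) {u y : MvPolynomial σ R}
    (hu : IsUnit (constantCoeff u)) (h : u * y ∈ P) : y ∈ P := by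
  refine mem_of_forall_mem_sup_pow_idealOfVars hP fun N => ?_
  refine Ideal.mem_sup_pow_of_unit_add_mul_mem (hu.map C) (v := u - C (constantCoeff u)) ?_
    (by rwa [add_sub_cancel]) N
  rw [← pow_one (idealOfVars σ R), mem_pow_idealOfVars_iff']
  intro x hx
  obtain rfl : x = 0 := (Finsupp.degree_eq_zero_iff x).mp (by omega)
  simp [constantCoeff_eq]

variable {k : Type*} [Field k]

theorem IsHomogeneous.constantCoeff_eq_zero {F : MvPolynomial σ k} {d : ℕ}
    (hF : F.IsHomogeneous d) (h : ¬IsUnit F) : constantCoeff F = 0 := by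
  by_contra hc
  have hd : d = 0 := by
    simpa using (hF (show coeff 0 F ≠ 0 by rwa [constantCoeff_eq] at hc)).symm
  apply h
  rw [(totalDegree_eq_zero_iff_eq_C (p := F)).mp (Nat.le_zero.mp (hd ▸ hF.totalDegree_le))]
  exact (isUnit_iff_ne_zero.mpr hc).map C

theorem mem_ofList_pow_of_mul_mem_of_isRegular [Finite σ] {g : MvPolynomial σ k}
    {l : List (MvPolynomial σ k)} (hreg : IsRegular (MvPolynomial σ k) (g :: l))
    (hhom : ∀ f ∈ g :: l, ∃ d, f.IsHomogeneous d) {s : ℕ} {y : MvPolynomial σ k}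
    (hy : g * y ∈ Ideal.ofList l ^ s) : y ∈ Ideal.ofList l ^ s := by
  set m := RingHom.ker (constantCoeff : MvPolynomial σ k →+* k)
  have : m.IsMaximal := RingHom.ker_isMaximal_of_surjective _ fun a => ⟨C a, constantCoeff_C _ a⟩
  let A := Localization.AtPrime m
  have hm : ∀ f ∈ g :: l, f ∈ m := fun f hf => by
    obtain ⟨d, hd⟩ := hhom f hf
    refine hd.constantCoeff_eq_zero fun hu => hreg.top_ne_smul ?_
    have htop : Ideal.ofList (g :: l) = ⊤ :=
      Ideal.eq_top_of_isUnit_mem _ (Ideal.subset_span hf) hu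
    rw [htop, Submodule.top_smul]
  have hregA : IsWeaklyRegular A (algebraMap _ A g :: l.map (algebraMap _ A)) :=
    hreg.1.of_isLocalization A m.primeCompl
  have hjacA : ∀ x ∈ algebraMap _ A g :: l.map (algebraMap _ A), x ∈ Ring.jacobson A := by
    rw [← List.map_cons]
    simp only [List.mem_map]
    rintro _ ⟨f, hf, rfl⟩
    rw [← Ideal.jacobson_bot]
    exact IsLocalRing.maximalIdeal_le_jacobson _
      ((IsLocalization.AtPrime.to_map_mem_maximal_iff A m f).mpr (hm f hf))
  have hyA := hregA.mem_ofList_pow_of_mul_mem hjacA (y := algebraMap _ A y) (s := s) (by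
    rw [← Ideal.map_ofList, ← Ideal.map_pow, ← map_mul]
    exact Ideal.mem_map_of_mem _ hy)
  rw [← Ideal.map_ofList, ← Ideal.map_pow,
    IsLocalization.algebraMap_mem_map_algebraMap_iff m.primeCompl] at hyA
  obtain ⟨u, hu, huy⟩ := hyA
  refine mem_of_mul_mem_of_isUnit_constantCoeff (Ideal.IsHomogeneous.pow ?_ s)
    (isUnit_iff_ne_zero.mpr hu) huy
  refine Ideal.homogeneous_span _ _ fun f hf => ?_
  obtain ⟨d, hd⟩ := hhom f (List.mem_cons_of_mem g hf)
  exact ⟨d, hd⟩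

end MvPolynomial

theorem stmt10 {k : Type*} [Field k] {n r : ℕ}
    (F : Fin (r + 1) → MvPolynomial (Fin (n + 1)) k) (d : Fin (r + 1) → ℕ)
    (hhom : ∀ i, (F i).IsHomogeneous (d i))
    (hreg : RingTheory.Sequence.IsRegular (MvPolynomial (Fin (n + 1)) k) (List.ofFn F))
    (I J : Ideal (MvPolynomial (Fin (n + 1)) k))
    (hI : I = Ideal.span (Set.range F))
    (hJ : J = Ideal.span (Set.range fun i : Fin r => F i.succ))
    (s : ℕ) (hs : 1 ≤ s) :
    -- J^s ⊆ I^{s-1}, so the map x ↦ (x, F₁ x) lands in I^{s-1}(-d₁) ⊕ J^s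
    (J ^ s ≤ I ^ (s - 1)) ∧
    -- injectivity of the first map x ↦ (x, F₁ x) (trivial)
    (∀ x ∈ J ^ s, ∀ x' ∈ J ^ s, x = x' ∧ F 0 * x = F 0 * x' → x = x') ∧
    -- exactness at the middle: ker((y,z) ↦ F₁ y - z) = im(x ↦ (x, F₁ x))
    (∀ y ∈ I ^ (s - 1), ∀ z ∈ J ^ s,
        F 0 * y - z = 0 ↔ ∃ x ∈ J ^ s, y = x ∧ z = F 0 * x) ∧
    -- the second map lands in I^s and is surjective onto I^s
    (∀ y ∈ I ^ (s - 1), ∀ z ∈ J ^ s, F 0 * y - z ∈ I ^ s) ∧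
    (∀ w ∈ I ^ s, ∃ y ∈ I ^ (s - 1), ∃ z ∈ J ^ s, w = F 0 * y - z) := by
  obtain ⟨t, rfl⟩ : ∃ t, s = t + 1 := ⟨s - 1, by omega⟩
  rw [Nat.add_sub_cancel]
  have hIJ : I = Ideal.span {F 0} ⊔ J := by
    rw [hI, hJ, Fin.range_fin_succ, Set.insert_eq, Ideal.span_union]
    rfl
  have hcancel : ∀ y, F 0 * y ∈ J ^ (t + 1) → y ∈ J ^ (t + 1) := by
    have hhom' : ∀ f ∈ List.ofFn F, ∃ d, f.IsHomogeneous d := fun f hf => by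
      obtain ⟨i, rfl⟩ := List.mem_ofFn.mp hf
      exact ⟨d i, hhom i⟩
    rw [List.ofFn_succ] at hreg hhom'
    rw [hJ, ← Ideal.ofList_ofFn]
    exact fun y => MvPolynomial.mem_ofList_pow_of_mul_mem_of_isRegular hreg hhom'
  subst hIJ
  refine ⟨?_, fun x _ x' _ h => h.1, fun y _ z hz => ⟨fun h => ?_, ?_⟩, fun y hy z hz => ?_, ?_⟩
  · exact (Ideal.pow_right_mono le_sup_right _).trans (Ideal.pow_le_pow_right t.le_succ)
  · obtain rfl : F 0 * y = z := sub_eq_zero.mp h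
    exact ⟨y, hcancel y hz, rfl, rfl⟩
  · rintro ⟨x, -, rfl, rfl⟩
    exact sub_self _
  · refine sub_mem ?_ (Ideal.pow_right_mono le_sup_right _ hz)
    rw [pow_succ']
    exact Ideal.mul_mem_mul (Ideal.mem_sup_left (Ideal.mem_span_singleton_self _)) hy
  · intro w hw
    obtain ⟨_, ha, b, hb, rfl⟩ := Submodule.mem_sup.mp (Ideal.sup_pow_succ_le _ _ t hw)
    obtain ⟨y, hy, rfl⟩ := Ideal.mem_span_singleton_mul.mp ha
    exact ⟨y, hy, -b, neg_mem hb, by ring⟩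
end

section
/- Let k be a field and R = k[x_0,...,x_n]. Let I = (F_1,...,F_r) be generated by a homogeneous regular sequence with deg F_i = d_i and d_1 ≤ ... ≤ d_r. Then the least degree of a nonzero homogeneous element of I^s is s·d_1, i.e., α(I^s) = s·d_1, where α(J) = min{ i : J_i ≠ 0 }. -/
/-!
Each generator `F j` is homogeneous of degree `d j ≥ d 0`, so `I` lies in `𝔪 ^ d 0`, where `𝔪` is
the ideal of the variables, and hence `I ^ s ⊆ 𝔪 ^ (s * d 0)`, whose nonzero homogeneous elements
have degree at least `s * d 0`. The bound is attained by `F 0 ^ s`, which is nonzero because the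
first element of a regular sequence is a nonzerodivisor.
-/

open MvPolynomial

lemma RingTheory.Sequence.IsRegular.ne_zero_of_cons {R M : Type*} [CommRing R] [AddCommGroup M]
    [Module R M] {r : R} {rs : List R} (h : IsRegular M (r :: rs)) : r ≠ 0 := by
  have : Nontrivial M := h.nontrivial
  rintro rfl
  have hreg : IsSMulRegular M (0 : R) := ((isRegular_cons_iff M 0 rs).mp h).1
  exact not_subsingleton M (IsSMulRegular.zero_iff_subsingleton.mp hreg)

lemma RingTheory.Sequence.IsRegular.ofFn_ne_zero {R M : Type*} [CommRing R] [AddCommGroup M]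
    [Module R M] {r : ℕ} (hr : 0 < r) {F : Fin r → R} (h : IsRegular M (List.ofFn F)) :
    F ⟨0, hr⟩ ≠ 0 := by
  obtain ⟨m, rfl⟩ := Nat.exists_eq_succ_of_ne_zero hr.ne'
  rw [List.ofFn_succ] at h
  exact h.ne_zero_of_cons

namespace MvPolynomial

variable {σ R : Type*} [CommSemiring R]

lemma IsHomogeneous.mem_pow_idealOfVars {f : MvPolynomial σ R} {m : ℕ} (hf : f.IsHomogeneous m) :
    f ∈ idealOfVars σ R ^ m := by
  rw [mem_pow_idealOfVars_iff]
  intro u hu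
  rw [Finsupp.degree_eq_weight_one, ← Pi.one_def, hf (mem_support_iff.mp hu)]

lemma IsHomogeneous.le_of_mem_pow_idealOfVars {f : MvPolynomial σ R} {i t : ℕ}
    (hf : f.IsHomogeneous i) (hf0 : f ≠ 0) (hft : f ∈ idealOfVars σ R ^ t) : t ≤ i := by
  obtain ⟨u, hu⟩ := exists_coeff_ne_zero hf0
  rw [← hf hu, Pi.one_def, ← Finsupp.degree_eq_weight_one]
  exact (mem_pow_idealOfVars_iff t f).mp hft u (mem_support_iff.mpr hu)

lemma span_range_le_pow_idealOfVars {ι : Type*} {F : ι → MvPolynomial σ R} {d : ι → ℕ} {t : ℕ}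
    (hF : ∀ j, (F j).IsHomogeneous (d j)) (hd : ∀ j, t ≤ d j) :
    Ideal.span (Set.range F) ≤ idealOfVars σ R ^ t := by
  rw [Ideal.span_le, Set.range_subset_iff]
  exact fun j => Ideal.pow_le_pow_right (hd j) (hF j).mem_pow_idealOfVars

end MvPolynomial

theorem stmt12_general {k : Type*} [Field k] {n r : ℕ} (hr : 0 < r)
    (F : Fin r → MvPolynomial (Fin (n + 1)) k) (d : Fin r → ℕ)
    (hhom : ∀ j, (F j).IsHomogeneous (d j)) (hmono : Monotone d)
    (hreg : RingTheory.Sequence.IsRegular (MvPolynomial (Fin (n + 1)) k) (List.ofFn F))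
    (I : Ideal (MvPolynomial (Fin (n + 1)) k)) (hI : I = Ideal.span (Set.range F))
    (s : ℕ) :
    IsLeast {i : ℕ | ∃ f ∈ I ^ s, f ≠ 0 ∧ MvPolynomial.IsHomogeneous f i}
      (s * d ⟨0, hr⟩) := by
  subst hI
  constructor
  · refine ⟨F ⟨0, hr⟩ ^ s, Ideal.pow_mem_pow (Ideal.subset_span (Set.mem_range_self _)) s,
      pow_ne_zero s (hreg.ofFn_ne_zero hr), ?_⟩
    rw [mul_comm]
    exact (hhom _).pow s
  · rintro i ⟨f, hfI, hf0, hfhom⟩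
    have hI_le : Ideal.span (Set.range F) ≤ idealOfVars (Fin (n + 1)) k ^ d ⟨0, hr⟩ :=
      span_range_le_pow_idealOfVars hhom fun j => hmono (Nat.zero_le j)
    refine hfhom.le_of_mem_pow_idealOfVars hf0 ?_
    rw [mul_comm, pow_mul]
    exact Ideal.pow_right_mono hI_le s hfI

theorem stmt12 {k : Type*} [Field k] {n r : ℕ} (hr : 0 < r)
    (F : Fin r → MvPolynomial (Fin (n + 1)) k) (d : Fin r → ℕ)
    (hhom : ∀ j, (F j).IsHomogeneous (d j)) (hmono : Monotone d)
    (hreg : RingTheory.Sequence.IsRegular (MvPolynomial (Fin (n + 1)) k) (List.ofFn F))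
    (I : Ideal (MvPolynomial (Fin (n + 1)) k)) (hI : I = Ideal.span (Set.range F))
    (s : ℕ) (hs : 1 ≤ s) :
    IsLeast {i : ℕ | ∃ f ∈ I ^ s, f ≠ 0 ∧ MvPolynomial.IsHomogeneous f i}
      (s * d ⟨0, hr⟩) :=
  stmt12_general hr F d hhom hmono hreg I hI s
end
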